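/- Let n ≥ 2 and let X be an n-pseudomanifold with H^{n−1}(X; Z/2) = 0. Then h^{n−1}(X) = 2 / diam(G_X), where diam(G_X) is the diameter of the flip graph of X. -/

import Mathlib

/-!
If the coboundary of an `(n-1)`-cochain is `δu + δv` for two `n`-faces `u ≠ v`, then, as every
`(n-1)`-face lies in exactly two `n`-faces, its support contains the shared faces of a walk from
`u` to `v` in the flip graph. So its norm is at least `dist u v`, and since `d ∘ d = 0` the same
bound holds for its cosystolic norm; the cochain of a geodesic between two faces at distance
`diam` therefore has ratio exactly `2 / diam`. Conversely, the coboundary of any `(n-1)`-cochain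
`φ` has even support, of size `2M` say, again because `(n-1)`-faces lie in two `n`-faces. Pairing
up the support and joining the pairs by geodesics gives `ψ` with `dψ = dφ` and
`‖ψ‖ ≤ M · diam`. As `H^{n-1} = 0`, `φ - ψ` is a coboundary, so `‖φ‖_csy ≤ M · diam` and the
ratio is at least `2 / diam`.
-/

open Finset

section Simplicial

variable {V : Type*} [DecidableEq V]

/-- `X` is a finite abstract simplicial complex: a finite family of nonempty finite sets
closed under taking nonempty subsets. -/
def IsComplex (X : Finset (Finset V)) : Prop :=
  (∀ σ ∈ X, σ.Nonempty) ∧ ∀ σ ∈ X, ∀ τ ⊆ σ, τ.Nonempty → τ ∈ X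

/-- The `k`-dimensional faces of `X` (faces of cardinality `k+1`). -/
def faces (X : Finset (Finset V)) (k : ℕ) : Finset (Finset V) :=
  X.filter fun σ => σ.card = k + 1

/-- The support of a `k`-cochain. -/
def csupp (X : Finset (Finset V)) (k : ℕ) (φ : Finset V → ZMod 2) : Finset (Finset V) :=
  (faces X k).filter fun σ => φ σ ≠ 0

/-- The norm of a `k`-cochain. -/
def cnorm (X : Finset (Finset V)) (k : ℕ) (φ : Finset V → ZMod 2) : ℕ :=
  (csupp X k φ).card

/-- The coboundary of a `k`-cochain, as a `(k+1)`-cochain. -/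
def cob (X : Finset (Finset V)) (k : ℕ) (φ : Finset V → ZMod 2) : Finset V → ZMod 2 :=
  fun τ => ∑ σ ∈ (faces X k).filter (fun σ => σ ⊆ τ), φ σ

/-- The cosystolic norm of a `k`-cochain, with the reduced convention at `k = 0`. -/
noncomputable def cosys (X : Finset (Finset V)) (k : ℕ) (φ : Finset V → ZMod 2) : ℕ :=
  if k = 0 then
    min (cnorm X 0 φ) (cnorm X 0 fun σ => 1 + φ σ)
  else
    sInf {m | ∃ ψ : Finset V → ZMod 2, m = cnorm X k fun τ => φ τ + cob X (k - 1) ψ τ}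

/-- The `k`-th (coboundary) Cheeger constant, valued in `ℝ≥0∞` (`⊤` if no cochain has
positive cosystolic norm). -/
noncomputable def cheeger (X : Finset (Finset V)) (k : ℕ) : ENNReal :=
  sInf {r : ENNReal | ∃ φ : Finset V → ZMod 2, 0 < cosys X k φ ∧
    r = (cnorm X (k + 1) (cob X k φ) : ENNReal) / (cosys X k φ : ENNReal)}

/-- The boundary of a `k`-chain, as a `(k-1)`-chain. -/
def bdry (X : Finset (Finset V)) (k : ℕ) (c : Finset V → ZMod 2) : Finset V → ZMod 2 :=
  fun τ => ∑ σ ∈ (faces X k).filter (fun σ => τ ⊆ σ), c σ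

/-- A `k`-cycle, with the reduced convention at `k = 0`. -/
def IsCycle (X : Finset (Finset V)) (k : ℕ) (c : Finset V → ZMod 2) : Prop :=
  if k = 0 then ∑ σ ∈ faces X 0, c σ = 0
  else ∀ τ ∈ faces X (k - 1), bdry X k c τ = 0

/-- Evaluation of a `k`-cochain on a `k`-chain. -/
def eval (X : Finset (Finset V)) (k : ℕ) (φ c : Finset V → ZMod 2) : ZMod 2 :=
  ∑ σ ∈ faces X k, φ σ * c σ

end Simplicial

/-- The flip graph of an `n`-dimensional complex: vertices are the `n`-faces, two being
adjacent when they share a common `(n-1)`-face. -/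
def flipGraph {V : Type*} [DecidableEq V] (X : Finset (Finset V)) (n : ℕ) :
    SimpleGraph {σ : Finset V // σ ∈ faces X n} where
  Adj σ τ := σ ≠ τ ∧ (σ.1 ∩ τ.1).card = n
  symm := by
    constructor
    rintro σ τ ⟨hne, h⟩
    exact ⟨hne.symm, by rwa [Finset.inter_comm]⟩
  loopless := by constructor; rintro σ ⟨hne, -⟩; exact hne rfl

/-- `X` is an `n`-pseudomanifold: a pure `n`-dimensional finite complex in which every
`(n-1)`-face lies in exactly two `n`-faces, and whose flip graph is connected. -/
def IsPseudomanifold {V : Type*} [DecidableEq V] (X : Finset (Finset V)) (n : ℕ) : Prop :=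
  IsComplex X ∧ (∀ σ ∈ X, ∃ τ ∈ faces X n, σ ⊆ τ) ∧
    (∀ τ ∈ faces X (n - 1), ((faces X n).filter fun σ => τ ⊆ σ).card = 2) ∧
    (flipGraph X n).Connected

lemma zmod_two_eq_one_of_ne_zero : ∀ a : ZMod 2, a ≠ 0 → a = 1 := by decide

lemma ENNReal.div_le_div_of_mul_le_mul {a b c d : ENNReal} (hc : c ≠ 0) (hc' : c ≠ ⊤)
    (h : a * c ≤ b * d) : a / d ≤ b / c := by
  rw [ENNReal.le_div_iff_mul_le (Or.inl hc) (Or.inl hc'), div_eq_mul_inv, mul_right_comm]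
  exact ENNReal.div_le_of_le_mul h

def IsNonbranching {V : Type*} [DecidableEq V] (X : Finset (Finset V)) (k : ℕ) : Prop :=
  ∀ τ ∈ faces X k, ((faces X (k + 1)).filter fun σ => τ ⊆ σ).card = 2

/-- `H^{k+1}(X; ℤ/2) = 0`. -/
def CocyclesAreCoboundaries {V : Type*} [DecidableEq V] (X : Finset (Finset V)) (k : ℕ) :
    Prop :=
  ∀ φ : Finset V → ZMod 2, (∀ τ ∈ faces X (k + 2), cob X (k + 1) φ τ = 0) →
    ∃ ψ : Finset V → ZMod 2, ∀ σ ∈ faces X (k + 1), φ σ = cob X k ψ σ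

section

open SimpleGraph

variable {V : Type*} {X : Finset (Finset V)} {k : ℕ}

lemma mem_faces {σ : Finset V} : σ ∈ faces X k ↔ σ ∈ X ∧ σ.card = k + 1 :=
  mem_filter

lemma card_of_mem_faces {σ : Finset V} (hσ : σ ∈ faces X k) : σ.card = k + 1 :=
  (mem_faces.mp hσ).2

lemma mem_faces_of_subset (hX : IsComplex X) {σ τ : Finset V} {j : ℕ} (hσ : σ ∈ faces X k)
    (hτσ : τ ⊆ σ) (hτ : τ.card = j + 1) : τ ∈ faces X j :=
  mem_faces.mpr ⟨hX.2 σ (mem_faces.mp hσ).1 τ hτσ (card_pos.mp (by omega)), hτ⟩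

lemma mem_csupp {φ : Finset V → ZMod 2} {σ : Finset V} :
    σ ∈ csupp X k φ ↔ σ ∈ faces X k ∧ φ σ ≠ 0 :=
  mem_filter

lemma cnorm_congr {φ ψ : Finset V → ZMod 2} (h : ∀ σ ∈ faces X k, φ σ = ψ σ) :
    cnorm X k φ = cnorm X k ψ := by
  unfold cnorm csupp
  rw [filter_congr fun σ hσ => by rw [h σ hσ]]

lemma cnorm_add_le (φ ψ : Finset V → ZMod 2) :
    cnorm X k (φ + ψ) ≤ cnorm X k φ + cnorm X k ψ := by
  classical
  refine (card_le_card fun σ hσ => ?_).trans (card_union_le _ _)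
  rw [mem_csupp] at hσ
  by_contra h
  simp only [mem_union, mem_csupp, not_or, not_and, not_not] at h
  exact hσ.2 (by simp [h.1 hσ.1, h.2 hσ.1])

lemma sum_eq_card_csupp (φ : Finset V → ZMod 2) :
    ∑ σ ∈ faces X k, φ σ = (csupp X k φ).card := by
  rw [csupp, card_filter, Nat.cast_sum]
  refine sum_congr rfl fun σ _ => ?_
  generalize φ σ = a
  fin_cases a <;> rfl

variable [DecidableEq V]

lemma cob_add (φ ψ : Finset V → ZMod 2) : cob X k (φ + ψ) = cob X k φ + cob X k ψ := by
  ext τ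
  simp [cob, sum_add_distrib]

lemma cob_zero : cob X k (0 : Finset V → ZMod 2) = 0 := by
  ext τ
  simp [cob]

lemma cob_single_apply {τ : Finset V} (hτ : τ ∈ faces X k) (σ : Finset V) :
    cob X k (Pi.single τ 1) σ = if τ ⊆ σ then 1 else 0 := by
  simp [cob, Pi.single_apply, sum_ite_eq', hτ]

lemma cnorm_single_le (τ : Finset V) : cnorm X k (Pi.single τ 1) ≤ 1 :=
  card_le_one.mpr fun σ hσ ρ hρ => by
    rw [mem_csupp, Pi.single_apply] at hσ hρ
    grind

lemma cnorm_single_add_single {u v : Finset V} (hu : u ∈ faces X k)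
    (hv : v ∈ faces X k) (huv : u ≠ v) : cnorm X k (Pi.single u 1 + Pi.single v 1) = 2 := by
  refine (congrArg card (ext fun σ => ?_)).trans (card_pair huv)
  simp only [mem_csupp, Pi.add_apply, Pi.single_apply, mem_insert, mem_singleton]
  by_cases hσu : σ = u <;> by_cases hσv : σ = v <;> simp_all

lemma csupp_add_single_of_mem {φ : Finset V → ZMod 2} {τ : Finset V} (hτ : τ ∈ csupp X k φ) :
    csupp X k (φ + Pi.single τ 1) = (csupp X k φ).erase τ := by
  ext σ
  rw [mem_erase, mem_csupp, mem_csupp] at *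
  by_cases hστ : σ = τ
  · subst hστ
    simp [zmod_two_eq_one_of_ne_zero _ hτ.2, hτ.1, CharTwo.add_self_eq_zero]
  · simp [hστ]

lemma filter_between_eq_image_erase (hX : IsComplex X) {σ ρ : Finset V}
    (hσ : σ ∈ faces X (k + 2)) (hρσ : ρ ⊆ σ) :
    (faces X (k + 1)).filter (fun τ => ρ ⊆ τ ∧ τ ⊆ σ) = (σ \ ρ).image σ.erase := by
  have hσcard := card_of_mem_faces hσ
  ext τ
  simp only [mem_filter, mem_image, mem_sdiff]
  constructor
  · rintro ⟨hτ, hρτ, hτσ⟩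
    obtain ⟨x, hx⟩ : ∃ x, σ \ τ = {x} := card_eq_one.mp <| by
      rw [card_sdiff_of_subset hτσ, card_of_mem_faces hτ, hσcard]; omega
    have hxστ : x ∈ σ \ τ := hx ▸ mem_singleton_self x
    rw [mem_sdiff] at hxστ
    refine ⟨x, ⟨hxστ.1, fun hxρ => hxστ.2 (hρτ hxρ)⟩, ?_⟩
    rw [← sdiff_singleton_eq_erase, ← hx, Finset.sdiff_sdiff_eq_self hτσ]
  · rintro ⟨x, ⟨hxσ, hxρ⟩, rfl⟩
    refine ⟨mem_faces_of_subset hX hσ (erase_subset x σ) ?_, ?_, erase_subset x σ⟩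
    · rw [card_erase_of_mem hxσ, hσcard]; rfl
    · exact fun y hy => mem_erase.mpr ⟨fun e => hxρ (e ▸ hy), hρσ hy⟩

lemma card_filter_between (hX : IsComplex X) {σ ρ : Finset V}
    (hσ : σ ∈ faces X (k + 2)) (hρ : ρ ∈ faces X k) (hρσ : ρ ⊆ σ) :
    ((faces X (k + 1)).filter (fun τ => ρ ⊆ τ ∧ τ ⊆ σ)).card = 2 := by
  rw [filter_between_eq_image_erase hX hσ hρσ,
    card_image_of_injOn ((erase_injOn σ).mono sdiff_subset), card_sdiff_of_subset hρσ,
    card_of_mem_faces hσ, card_of_mem_faces hρ]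
  omega

lemma cob_cob_apply (hX : IsComplex X) (ψ : Finset V → ZMod 2) {σ : Finset V}
    (hσ : σ ∈ faces X (k + 2)) : cob X (k + 1) (cob X k ψ) σ = 0 := by
  simp only [cob]
  rw [sum_comm' (t' := faces X k)
    (s' := fun ρ => (faces X (k + 1)).filter (fun τ => ρ ⊆ τ ∧ τ ⊆ σ)) (by grind)]
  refine sum_eq_zero fun ρ hρ => ?_
  rw [sum_const]
  by_cases hρσ : ρ ⊆ σ
  · rw [card_filter_between hX hσ hρ hρσ, two_nsmul, CharTwo.add_self_eq_zero]
  · rw [filter_false_of_mem fun τ _ h => hρσ (h.1.trans h.2), card_empty, zero_smul]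

namespace IsNonbranching

lemma sum_cob_eq_zero (h : IsNonbranching X k) (ψ : Finset V → ZMod 2) :
    ∑ σ ∈ faces X (k + 1), cob X k ψ σ = 0 := by
  simp only [cob]
  rw [sum_comm' (t' := faces X k) (s' := fun τ => (faces X (k + 1)).filter fun σ => τ ⊆ σ)
    (by grind)]
  refine sum_eq_zero fun τ hτ => ?_
  rw [sum_const, h τ hτ, two_nsmul, CharTwo.add_self_eq_zero]

lemma even_cnorm_cob (h : IsNonbranching X k) (ψ : Finset V → ZMod 2) :
    Even (cnorm X (k + 1) (cob X k ψ)) := by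
  rw [← ZMod.natCast_eq_zero_iff_even, cnorm, ← sum_eq_card_csupp, h.sum_cob_eq_zero]

lemma subset_iff_eq_or_eq (h : IsNonbranching X k) {τ u w : Finset V} (hτ : τ ∈ faces X k)
    (hu : u ∈ faces X (k + 1)) (hw : w ∈ faces X (k + 1)) (huw : u ≠ w) (hτu : τ ⊆ u)
    (hτw : τ ⊆ w) {σ : Finset V} (hσ : σ ∈ faces X (k + 1)) : τ ⊆ σ ↔ σ = u ∨ σ = w := by
  have hpair : (faces X (k + 1)).filter (fun σ => τ ⊆ σ) = {u, w} := by
    refine (eq_of_subset_of_card_le ?_ ?_).symm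
    · simp [insert_subset_iff, hu, hw, hτu, hτw]
    · rw [h τ hτ, card_pair huw]
  simpa [hσ] using congrArg (σ ∈ ·) hpair

lemma exists_ne_subset (h : IsNonbranching X k) {τ : Finset V} (hτ : τ ∈ faces X k)
    (u : Finset V) : ∃ w ∈ faces X (k + 1), w ≠ u ∧ τ ⊆ w := by
  obtain ⟨w, hw, hwu⟩ := exists_mem_ne (h τ hτ ▸ one_lt_two) u
  exact ⟨w, (mem_filter.mp hw).1, hwu, (mem_filter.mp hw).2⟩

lemma cob_single_eq (h : IsNonbranching X k) {τ u w : Finset V} (hτ : τ ∈ faces X k)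
    (hu : u ∈ faces X (k + 1)) (hw : w ∈ faces X (k + 1)) (huw : u ≠ w) (hτu : τ ⊆ u)
    (hτw : τ ⊆ w) :
    Set.EqOn (cob X k (Pi.single τ 1)) (Pi.single u 1 + Pi.single w 1) (faces X (k + 1)) := by
  intro σ hσ
  simp only [cob_single_apply hτ, h.subset_iff_eq_or_eq hτ hu hw huw hτu hτw hσ]
  by_cases hσu : σ = u <;> by_cases hσw : σ = w <;> simp_all

end IsNonbranching

lemma inter_mem_faces_of_adj (hX : IsComplex X) {u w : {σ // σ ∈ faces X (k + 1)}}
    (h : (flipGraph X (k + 1)).Adj u w) : u.1 ∩ w.1 ∈ faces X k :=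
  mem_faces_of_subset hX u.2 inter_subset_left h.2

lemma flipGraph_adj_of_subset {τ : Finset V} (hτ : τ ∈ faces X k)
    {u w : {σ // σ ∈ faces X (k + 1)}} (huw : u ≠ w) (hτu : τ ⊆ u.1) (hτw : τ ⊆ w.1) :
    (flipGraph X (k + 1)).Adj u w := by
  have hle : (u.1 ∩ w.1).card ≤ k + 1 := by
    by_contra! hgt
    have hu : u.1 ∩ w.1 = u.1 :=
      eq_of_subset_of_card_le inter_subset_left (by rw [card_of_mem_faces u.2]; omega)
    have hw : u.1 ∩ w.1 = w.1 :=
      eq_of_subset_of_card_le inter_subset_right (by rw [card_of_mem_faces w.2]; omega)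
    exact huw (Subtype.ext (hu.symm.trans hw))
  have hge := card_of_mem_faces hτ ▸ card_le_card (subset_inter hτu hτw)
  exact ⟨huw, le_antisymm hle hge⟩

/-- The cochain is the sum of the `k`-faces shared by consecutive steps of the walk. -/
lemma exists_cochain_of_walk (hX : IsComplex X) (hnb : IsNonbranching X k)
    {u v : {σ // σ ∈ faces X (k + 1)}} (p : (flipGraph X (k + 1)).Walk u v) :
    ∃ φ, Set.EqOn (cob X k φ) (Pi.single u.1 1 + Pi.single v.1 1) (faces X (k + 1)) ∧
      cnorm X k φ ≤ p.length := by
  induction p with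
  | nil =>
    exact ⟨0, fun σ _ => by simp [cob_zero, CharTwo.add_self_eq_zero], by simp [cnorm, csupp]⟩
  | @cons u w v huw q ih =>
    obtain ⟨φ, hφ, hlen⟩ := ih
    refine ⟨Pi.single (u.1 ∩ w.1) 1 + φ, fun σ hσ => ?_, ?_⟩
    · have hsingle := hnb.cob_single_eq (inter_mem_faces_of_adj hX huw) u.2 w.2
        (Subtype.coe_ne_coe.mpr huw.ne) inter_subset_left inter_subset_right hσ
      rw [cob_add, Pi.add_apply, hsingle, hφ hσ]
      simp only [Pi.add_apply]
      grind
    · calc cnorm X k (Pi.single (u.1 ∩ w.1) 1 + φ)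
          ≤ cnorm X k (Pi.single (u.1 ∩ w.1) 1) + cnorm X k φ := cnorm_add_le _ _
        _ ≤ 1 + q.length := add_le_add (cnorm_single_le _) hlen
        _ = (q.cons huw).length := by rw [Walk.length_cons, add_comm]

/-- Leave `u` through a `k`-face in the support of `φ`, remove that face from `φ`, and recurse from
the other `(k+1)`-face containing it. -/
theorem exists_walk_of_cob_eq (hnb : IsNonbranching X k) {u v : {σ // σ ∈ faces X (k + 1)}}
    {φ : Finset V → ZMod 2}
    (hφ : Set.EqOn (cob X k φ) (Pi.single u.1 1 + Pi.single v.1 1) (faces X (k + 1))) :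
    ∃ p : (flipGraph X (k + 1)).Walk u v, p.length ≤ cnorm X k φ := by
  by_cases huv : u = v
  · subst huv
    exact ⟨Walk.nil, Nat.zero_le _⟩
  have hu : cob X k φ u.1 ≠ 0 := by
    rw [hφ u.2]
    simp [Subtype.coe_ne_coe.mpr huv]
  obtain ⟨τ, hτ, hφτ⟩ := exists_ne_zero_of_sum_ne_zero hu
  obtain ⟨hτ, hτu⟩ := mem_filter.mp hτ
  obtain ⟨w, hw, hwu, hτw⟩ := hnb.exists_ne_subset hτ u.1
  have hτsupp : τ ∈ csupp X k φ := mem_csupp.mpr ⟨hτ, hφτ⟩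
  have hnorm : cnorm X k (φ + Pi.single τ 1) + 1 = cnorm X k φ := by
    rw [cnorm, cnorm, csupp_add_single_of_mem hτsupp, card_erase_add_one hτsupp]
  have hcob : Set.EqOn (cob X k (φ + Pi.single τ 1)) (Pi.single w 1 + Pi.single v.1 1)
      (faces X (k + 1)) := by
    intro σ hσ
    have hsingle := hnb.cob_single_eq hτ u.2 hw hwu.symm hτu hτw hσ
    rw [cob_add, Pi.add_apply, hsingle, hφ hσ]
    simp only [Pi.add_apply]
    grind
  obtain ⟨p, hp⟩ := exists_walk_of_cob_eq hnb (u := ⟨w, hw⟩) hcob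
  have hadj : (flipGraph X (k + 1)).Adj u ⟨w, hw⟩ :=
    flipGraph_adj_of_subset hτ (fun h => hwu (congrArg Subtype.val h).symm) hτu hτw
  exact ⟨p.cons hadj, by rw [Walk.length_cons]; omega⟩
termination_by cnorm X k φ

lemma cosys_succ (φ : Finset V → ZMod 2) :
    cosys X (k + 1) φ = sInf {m | ∃ ψ, m = cnorm X (k + 1) (φ + cob X k ψ)} :=
  if_neg k.succ_ne_zero

lemma cosys_le_cnorm_add_cob (φ ψ : Finset V → ZMod 2) :
    cosys X (k + 1) φ ≤ cnorm X (k + 1) (φ + cob X k ψ) := by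
  rw [cosys_succ]
  exact Nat.sInf_le ⟨ψ, rfl⟩

lemma cosys_le_cnorm (φ : Finset V → ZMod 2) : cosys X (k + 1) φ ≤ cnorm X (k + 1) φ := by
  simpa [cob_zero] using cosys_le_cnorm_add_cob (X := X) φ 0

lemma le_cosys {φ : Finset V → ZMod 2} {n : ℕ}
    (h : ∀ ψ, n ≤ cnorm X (k + 1) (φ + cob X k ψ)) : n ≤ cosys X (k + 1) φ := by
  rw [cosys_succ]
  exact le_csInf ⟨_, 0, rfl⟩ (by rintro _ ⟨ψ, rfl⟩; exact h ψ)

lemma cosys_le_of_cob_eq (hcoh : CocyclesAreCoboundaries X k) {φ ψ : Finset V → ZMod 2}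
    (h : Set.EqOn (cob X (k + 1) φ) (cob X (k + 1) ψ) (faces X (k + 2))) :
    cosys X (k + 1) φ ≤ cnorm X (k + 1) ψ := by
  obtain ⟨ψ₀, hψ₀⟩ := hcoh (φ + ψ) fun τ hτ => by
    rw [cob_add, Pi.add_apply, h hτ, CharTwo.add_self_eq_zero]
  refine (cosys_le_cnorm_add_cob φ ψ₀).trans_eq (cnorm_congr fun σ hσ => ?_)
  rw [Pi.add_apply, ← hψ₀ σ hσ, Pi.add_apply, ← add_assoc, CharTwo.add_self_eq_zero, zero_add]

lemma dist_le_cosys (hX : IsComplex X) (hnb : IsNonbranching X (k + 1))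
    {u v : {σ // σ ∈ faces X (k + 2)}} {φ : Finset V → ZMod 2}
    (hφ : Set.EqOn (cob X (k + 1) φ) (Pi.single u.1 1 + Pi.single v.1 1) (faces X (k + 2))) :
    (flipGraph X (k + 2)).dist u v ≤ cosys X (k + 1) φ :=
  le_cosys fun ψ => by
    obtain ⟨p, hp⟩ := exists_walk_of_cob_eq hnb (φ := φ + cob X k ψ) fun σ hσ => by
      rw [cob_add, Pi.add_apply, cob_cob_apply hX ψ hσ, add_zero, hφ hσ]
    exact (dist_le p).trans hp

/-- Pair up the support of `α` and join each pair by a geodesic of the flip graph. -/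
lemma exists_cochain_cob_eq (hX : IsComplex X) (hnb : IsNonbranching X k)
    (hconn : (flipGraph X (k + 1)).Connected) (M : ℕ) {α : Finset V → ZMod 2}
    (hα : cnorm X (k + 1) α = 2 * M) :
    ∃ ψ, Set.EqOn (cob X k ψ) α (faces X (k + 1)) ∧
      cnorm X k ψ ≤ M * (flipGraph X (k + 1)).diam := by
  induction M generalizing α with
  | zero =>
    refine ⟨0, fun σ hσ => ?_, by simp [cnorm, csupp]⟩
    rw [mul_zero, cnorm, card_eq_zero, csupp, filter_eq_empty_iff] at hα
    simpa [cob_zero] using (not_not.mp (hα hσ)).symm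
  | succ M ih =>
    obtain ⟨u, hu, v, hv, huv⟩ := one_lt_card.mp (by rw [← cnorm, hα]; omega)
    have hv' : v ∈ csupp X (k + 1) (α + Pi.single u 1) := by
      rw [csupp_add_single_of_mem hu]
      exact mem_erase.mpr ⟨huv.symm, hv⟩
    have hnorm : cnorm X (k + 1) (α + Pi.single u 1 + Pi.single v 1) = 2 * M := by
      rw [cnorm, csupp_add_single_of_mem hv', card_erase_of_mem hv',
        csupp_add_single_of_mem hu, card_erase_of_mem hu, ← cnorm, hα]
      omega
    obtain ⟨ψ, hψ, hψnorm⟩ := ih hnorm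
    obtain ⟨p, hp⟩ :=
      hconn.exists_walk_length_eq_dist ⟨u, (mem_csupp.mp hu).1⟩ ⟨v, (mem_csupp.mp hv).1⟩
    obtain ⟨φ, hφ, hφnorm⟩ := exists_cochain_of_walk hX hnb p
    have : Nonempty {σ // σ ∈ faces X (k + 1)} := hconn.nonempty
    have hdiam : p.length ≤ (flipGraph X (k + 1)).diam :=
      hp ▸ dist_le_diam (connected_iff_ediam_ne_top.mp hconn)
    refine ⟨φ + ψ, fun σ hσ => ?_, ?_⟩
    · rw [cob_add, Pi.add_apply, hφ hσ, hψ hσ]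
      simp only [Pi.add_apply]
      grind
    · calc cnorm X k (φ + ψ) ≤ cnorm X k φ + cnorm X k ψ := cnorm_add_le φ ψ
        _ ≤ (flipGraph X (k + 1)).diam + M * (flipGraph X (k + 1)).diam :=
          add_le_add (hφnorm.trans hdiam) hψnorm
        _ = (M + 1) * (flipGraph X (k + 1)).diam := by ring

lemma two_mul_cosys_le (hX : IsComplex X) (hnb : IsNonbranching X (k + 1))
    (hconn : (flipGraph X (k + 2)).Connected) (hcoh : CocyclesAreCoboundaries X k)
    (φ : Finset V → ZMod 2) :
    2 * cosys X (k + 1) φ ≤ cnorm X (k + 2) (cob X (k + 1) φ) * (flipGraph X (k + 2)).diam := by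
  obtain ⟨M, hM⟩ := (hnb.even_cnorm_cob φ).two_dvd
  obtain ⟨ψ, hψ, hψnorm⟩ := exists_cochain_cob_eq hX hnb hconn M hM
  have hcosys := (cosys_le_of_cob_eq hcoh fun σ hσ => (hψ hσ).symm).trans hψnorm
  rw [hM, mul_assoc]
  exact Nat.mul_le_mul_left 2 hcosys

/-- The witness is the cochain of a geodesic between two faces at maximal distance. -/
theorem cheeger_le_two_div_diam (hX : IsComplex X) (hnb : IsNonbranching X (k + 1)) :
    cheeger X (k + 1) ≤ 2 / ((flipGraph X (k + 2)).diam : ENNReal) := by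
  set G := flipGraph X (k + 2)
  by_cases hdiam : G.diam = 0
  · rw [hdiam, Nat.cast_zero, ENNReal.div_zero two_ne_zero]
    exact le_top
  have : Nonempty {σ // σ ∈ faces X (k + 2)} := (G.nontrivial_of_diam_ne_zero hdiam).to_nonempty
  obtain ⟨u, v, huv⟩ := G.exists_dist_eq_diam
  obtain ⟨p, hp⟩ := (G.preconnected_of_ediam_ne_top (G.ediam_ne_top_of_diam_ne_zero hdiam)
    u v).exists_walk_length_eq_dist
  obtain ⟨φ, hφ, hφnorm⟩ := exists_cochain_of_walk hX hnb p
  have hcosys : cosys X (k + 1) φ = G.diam :=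
    le_antisymm ((cosys_le_cnorm φ).trans (hφnorm.trans (hp.trans huv).le))
      (huv ▸ dist_le_cosys hX hnb hφ)
  have hne : u.1 ≠ v.1 := fun h => hdiam (by rw [← huv, Subtype.ext h, SimpleGraph.dist_self])
  have hcob : cnorm X (k + 1 + 1) (cob X (k + 1) φ) = 2 :=
    (cnorm_congr hφ).trans (cnorm_single_add_single u.2 v.2 hne)
  refine sInf_le ⟨φ, hcosys ▸ Nat.pos_of_ne_zero hdiam, ?_⟩
  rw [hcosys, hcob, Nat.cast_ofNat]

theorem two_div_diam_le_cheeger (hX : IsComplex X) (hnb : IsNonbranching X (k + 1))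
    (hconn : (flipGraph X (k + 2)).Connected) (hcoh : CocyclesAreCoboundaries X k) :
    2 / ((flipGraph X (k + 2)).diam : ENNReal) ≤ cheeger X (k + 1) := by
  refine le_sInf ?_
  rintro _ ⟨φ, hpos, rfl⟩
  exact ENNReal.div_le_div_of_mul_le_mul (by exact_mod_cast hpos.ne') (ENNReal.natCast_ne_top _)
    (by exact_mod_cast two_mul_cosys_le hX hnb hconn hcoh φ)

end

theorem pseudomanifold_cheeger_general {V : Type*} [DecidableEq V]
    (n : ℕ) (hn : 2 ≤ n) (X : Finset (Finset V))
    (hpm : IsPseudomanifold X n)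
    (hcoh : ∀ φ : Finset V → ZMod 2,
      (∀ τ ∈ faces X n, cob X (n - 1) φ τ = 0) →
      ∃ ψ : Finset V → ZMod 2, ∀ σ ∈ faces X (n - 1), φ σ = cob X (n - 2) ψ σ) :
    cheeger X (n - 1) = 2 / ((flipGraph X n).diam : ENNReal) := by
  obtain ⟨k, rfl⟩ : ∃ k, n = k + 2 := ⟨n - 2, by omega⟩
  obtain ⟨hX, -, hnb, hconn⟩ := hpm
  exact le_antisymm (cheeger_le_two_div_diam hX hnb)
    (two_div_diam_le_cheeger hX hnb hconn hcoh)

/-- For an `n`-pseudomanifold `X` with `H^{n-1}(X; ℤ/2) = 0`, the `(n-1)`-th Cheeger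
constant equals `2 / diam(G_X)` where `G_X` is the flip graph of `X`. -/
theorem pseudomanifold_cheeger {V : Type*} [DecidableEq V] [Fintype V]
    (n : ℕ) (hn : 2 ≤ n) (X : Finset (Finset V))
    (hpm : IsPseudomanifold X n)
    (hcoh : ∀ φ : Finset V → ZMod 2,
      (∀ τ ∈ faces X n, cob X (n - 1) φ τ = 0) →
      ∃ ψ : Finset V → ZMod 2, ∀ σ ∈ faces X (n - 1), φ σ = cob X (n - 2) ψ σ) :
    cheeger X (n - 1) = 2 / ((flipGraph X n).diam : ENNReal) :=
  pseudomanifold_cheeger_general n hn X hpm hcoh
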